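/- Equip ℝ³ with the norm ‖(x,y,z)‖ := max(|x| + |z|, √(x² + y²)). Then the function f : ℝ³ → ℝ, f(x,y,z) = −x, is a horofunction of (ℝ³, ‖·‖) but is not a Busemann point. -/
import Mathlib


open Filter Topology Set

noncomputable section

/-- `φ_z` for the norm `N`: `φ_z(x) = N(z − x) − N(z)`. -/
def phiN {V : Type*} [AddCommGroup V] (N : V → ℝ) (z : V) : V → ℝ :=
  fun x => N (z - x) - N z

/-- A horofunction for the norm `N`: a limit, uniformly on compact sets, of
functions `φ_{z_n}`, which is not itself of the form `φ_z`. -/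
def IsHorofunctionN {V : Type*} [AddCommGroup V] [TopologicalSpace V]
    (N : V → ℝ) (h : V → ℝ) : Prop :=
  (∃ z : ℕ → V, ∀ K : Set V, IsCompact K →
      TendstoUniformlyOn (fun n x => phiN N (z n) x) h atTop K) ∧
  ∀ z : V, h ≠ phiN N z

/-- An almost-geodesic for the norm `N`. -/
def IsAlmostGeodesicN {V : Type*} [AddCommGroup V] (N : V → ℝ)
    (T : Set ℝ) (γ : ℝ → V) : Prop :=
  T ⊆ Set.Ici (0 : ℝ) ∧ (0 : ℝ) ∈ T ∧ ¬ BddAbove T ∧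
  ∀ ε > (0 : ℝ), ∃ M : ℝ, ∀ s ∈ T, ∀ t ∈ T, M ≤ s → s ≤ t →
    |N (γ t - γ s) + N (γ s - γ 0) - t| < ε

/-- A Busemann point for the norm `N`: a horofunction which is the limit, uniformly
on compact sets, of `φ_{γ(t)}` along an almost-geodesic `γ`. -/
def IsBusemannPointN {V : Type*} [AddCommGroup V] [TopologicalSpace V]
    (N : V → ℝ) (h : V → ℝ) : Prop :=
  IsHorofunctionN N h ∧
  ∃ (T : Set ℝ) (γ : ℝ → V), IsAlmostGeodesicN N T γ ∧
    ∀ K : Set V, IsCompact K → ∀ ε > (0 : ℝ), ∃ M : ℝ, ∀ t ∈ T, M ≤ t →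
      ∀ x ∈ K, |phiN N (γ t) x - h x| < ε

/-- The norm `‖(x,y,z)‖ = max(|x| + |z|, √(x² + y²))` on `ℝ³`. -/
def N3 (p : ℝ × ℝ × ℝ) : ℝ :=
  max (|p.1| + |p.2.2|) (Real.sqrt (p.1 ^ 2 + p.2.1 ^ 2))

set_option maxHeartbeats 1000000

lemma sqrt_tri (u1 u2 v1 v2 : ℝ) :
    Real.sqrt ((u1+v1)^2+(u2+v2)^2) ≤ Real.sqrt (u1^2+u2^2) + Real.sqrt (v1^2+v2^2) := by
  set A := Real.sqrt (u1^2+u2^2) with hA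
  set B := Real.sqrt (v1^2+v2^2) with hB
  have hA0 : 0 ≤ A := Real.sqrt_nonneg _
  have hB0 : 0 ≤ B := Real.sqrt_nonneg _
  have hA2 : A^2 = u1^2+u2^2 := Real.sq_sqrt (by positivity)
  have hB2 : B^2 = v1^2+v2^2 := Real.sq_sqrt (by positivity)
  have hcs : u1*v1 + u2*v2 ≤ A*B := by
    rcases le_or_gt (u1*v1+u2*v2) 0 with h | h
    · exact h.trans (mul_nonneg hA0 hB0)
    · have h2 : (u1*v1+u2*v2)^2 ≤ (A*B)^2 := by
        rw [mul_pow, hA2, hB2]; nlinarith [sq_nonneg (u1*v2 - u2*v1)]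
      nlinarith [mul_nonneg hA0 hB0]
  have : (u1+v1)^2+(u2+v2)^2 ≤ (A+B)^2 := by nlinarith
  calc Real.sqrt ((u1+v1)^2+(u2+v2)^2) ≤ Real.sqrt ((A+B)^2) := Real.sqrt_le_sqrt this
    _ = A + B := Real.sqrt_sq (by linarith)

lemma N3_nonneg (p : ℝ × ℝ × ℝ) : 0 ≤ N3 p :=
  le_trans (by positivity) (le_max_left _ _)

lemma N3_zero : N3 0 = 0 := by simp [N3]

lemma N3_neg (p : ℝ × ℝ × ℝ) : N3 (-p) = N3 p := by
  simp [N3, neg_pow, abs_neg]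

lemma N3_add (p q : ℝ × ℝ × ℝ) : N3 (p + q) ≤ N3 p + N3 q := by
  unfold N3
  apply max_le
  · calc |(p+q).1| + |(p+q).2.2| ≤ (|p.1| + |q.1|) + (|p.2.2| + |q.2.2|) := by
          simp only [Prod.fst_add, Prod.snd_add]
          gcongr <;> exact abs_add_le _ _
      _ = (|p.1| + |p.2.2|) + (|q.1| + |q.2.2|) := by ring
      _ ≤ _ := by gcongr <;> exact le_max_left _ _
  · calc Real.sqrt ((p+q).1^2 + (p+q).2.1^2)
        ≤ Real.sqrt (p.1^2+p.2.1^2) + Real.sqrt (q.1^2+q.2.1^2) := by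
          simpa using sqrt_tri p.1 p.2.1 q.1 q.2.1
      _ ≤ _ := by gcongr <;> exact le_max_right _ _

lemma abs_N3_sub (p q : ℝ × ℝ × ℝ) : N3 p - N3 q ≤ N3 (p - q) := by
  have := N3_add (p - q) q
  simp at this; linarith

set_option maxHeartbeats 2000000 in
lemma key_est (R x y w m ε : ℝ) (hR : 0 ≤ R) (hx : |x| ≤ R) (hy : |y| ≤ R) (hw : |w| ≤ R)
    (hε : 0 < ε) (hm1 : 8*(R+1) ≤ m) (hm2 : 7*(R+1)^2/ε + 1 ≤ m) :
    |(-x) - (N3 ((m^3 - x, m^2 - y, -w)) - N3 ((m^3, m^2, 0)))| < ε := by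
  have hxR := abs_le.mp hx
  have hyR := abs_le.mp hy
  have hwR := abs_le.mp hw
  have hm8 : 8 ≤ m := by linarith
  have hm0 : 0 < m := by linarith
  have hRm : 8*R + 8 ≤ m := by linarith
  have hmm2 : m ≤ m^2 := by nlinarith
  have hmm3 : m^2 ≤ m^3 := by nlinarith
  set a := m^3 - x with ha
  set b := m^2 - y with hb
  have ham : m^3 - R ≤ a ∧ a ≤ m^3 + R := by constructor <;> (rw [ha]; linarith)
  have hbm : m^2 - R ≤ b ∧ b ≤ m^2 + R := by constructor <;> (rw [hb]; linarith)
  have ha0 : 0 < a := by linarith [ham.1]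
  have hb0 : 0 < b := by linarith [hbm.1]
  set D := Real.sqrt (a^2 + b^2) with hD
  have hD0 : 0 ≤ D := Real.sqrt_nonneg _
  have hD2 : D^2 = a^2 + b^2 := Real.sq_sqrt (by positivity)
  have hDa : a ≤ D := by
    have := Real.sqrt_le_sqrt (show a^2 ≤ a^2 + b^2 by linarith [sq_nonneg b])
    rwa [Real.sqrt_sq ha0.le] at this
  have hDab : D ≤ a + b := by
    have := Real.sqrt_le_sqrt (show a^2 + b^2 ≤ (a+b)^2 by linarith [mul_pos ha0 hb0])
    rwa [Real.sqrt_sq (by linarith)] at this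
  have q3 : 8*R*m^3 ≤ m^4 := by
    have := mul_le_mul_of_nonneg_right (show 8*R ≤ m by linarith) (show (0:ℝ) ≤ m^3 by positivity)
    linarith [this]
  have q2 : 8*R*m^2 ≤ m^3 := by
    have := mul_le_mul_of_nonneg_right (show 8*R ≤ m by linarith) (show (0:ℝ) ≤ m^2 by positivity)
    linarith [this]
  have qR : 8*(R*R) ≤ m*R := by
    have := mul_le_mul_of_nonneg_right (show 8*R ≤ m by linarith) hR
    linarith [this]
  have qmR : 8*(m*R) ≤ m^2 := by
    have := mul_le_mul_of_nonneg_left (show 8*R ≤ m by linarith) hm0.le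
    linarith [this]
  have q43 : 8*m^3 ≤ m^4 := by
    have := mul_le_mul_of_nonneg_right hm8 (show (0:ℝ) ≤ m^3 by positivity)
    linarith [this]
  have q24 : 8*m^2 ≤ m^3 := by
    have := mul_le_mul_of_nonneg_right hm8 (show (0:ℝ) ≤ m^2 by positivity)
    linarith [this]
  have hkey : R*(2*a + b) ≤ b^2 := by
    have h1 : R*(2*a + b) ≤ R*(2*(m^3+R) + (m^2+R)) := by
      apply mul_le_mul_of_nonneg_left _ hR; linarith [ham.2, hbm.2]
    have h2 : (m^2 - R)^2 ≤ b^2 := by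
      apply pow_le_pow_left₀ (by linarith) (hbm.1)
    have h3 : R*(2*(m^3+R) + (m^2+R)) ≤ (m^2 - R)^2 := by linarith [q3, q2, qR, qmR, q43, q24]
    linarith
  have hDaR : a + R ≤ D := by
    have h1 : D^2 - a^2 = b^2 := by linarith [hD2]
    have h5 := mul_le_mul_of_nonneg_left (show D+a ≤ 2*a+b by linarith) hR
    have h4 : R*(D+a) ≤ (D-a)*(D+a) := by linarith [h1, hkey, h5]
    have := le_of_mul_le_mul_right h4 (by linarith : 0 < D + a)
    linarith
  set E := Real.sqrt (m^6 + m^4) with hE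
  have hE0 : 0 ≤ E := Real.sqrt_nonneg _
  have hE2 : E^2 = m^6 + m^4 := Real.sq_sqrt (by positivity)
  have hEl : m^3 ≤ E := by
    have := Real.sqrt_le_sqrt (show (m^3)^2 ≤ m^6 + m^4 by
      have : (0:ℝ) < m^4 := by positivity
      linarith [this])
    rwa [Real.sqrt_sq (by positivity)] at this
  have hEu : E ≤ m^3 + m := by
    have := Real.sqrt_le_sqrt (show m^6 + m^4 ≤ (m^3+m)^2 by
      have h9 : (0:ℝ) < m^4 := by positivity
      have h10 : (0:ℝ) < m^2 := by positivity
      have h11 : (m^3+m)^2 = m^6+2*m^4+m^2 := by ring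
      linarith [h9, h10, h11])
    rwa [Real.sqrt_sq (by positivity)] at this
  have hN1 : N3 ((m^3 - x, m^2 - y, -w)) = D := by
    simp only [N3, ← ha, ← hb, ← hD]
    rw [abs_of_pos ha0, abs_neg]
    exact max_eq_right (by linarith)
  have hN2 : N3 ((m^3, m^2, 0)) = E := by
    simp only [N3]
    rw [show ((m^3)^2 + (m^2)^2 : ℝ) = m^6 + m^4 by ring, ← hE,
      abs_of_pos (by positivity : (0:ℝ) < m^3), abs_zero, add_zero]
    exact max_eq_right hEl
  rw [hN1, hN2]
  have hpos : 0 < D + E := by linarith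
  have hεm : 7*(R+1)^2 ≤ (m - 1)*ε := by
    have := (div_le_iff₀ hε).mp (by linarith : 7*(R+1)^2/ε ≤ m - 1)
    linarith
  have hprod : (-x - (D - E))*(D+E) = -(x*((D + E) - 2*m^3)) - (x^2 - 2*m^2*y + y^2) := by
    have h5 : (-x - (D - E))*(D+E) = -x*(D+E) - (D^2 - E^2) := by ring
    rw [h5, hD2, hE2, ha, hb]; ring
  have hnum : |(-x - (D - E))*(D+E)| ≤ 7*(R+1)^2*m^2 := by
    have hb1 : |D + E - 2*m^3| ≤ m^2 + 2*R + m := by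
      rw [abs_le]; constructor <;> linarith [ham.1, ham.2, hbm.2, hDa, hDab, hEl, hEu]
    have hb2 : |x*((D+E) - 2*m^3)| ≤ R * (m^2 + 2*R + m) := by
      rw [abs_mul]; exact mul_le_mul hx hb1 (abs_nonneg _) hR
    have hb3 : |x^2 - 2*m^2*y + y^2| ≤ R^2 + 2*m^2*R + R^2 := by
      have h6 : x^2 ≤ R^2 := sq_le_sq' hxR.1 hxR.2
      have h7 : y^2 ≤ R^2 := sq_le_sq' hyR.1 hyR.2
      have h8a := mul_le_mul_of_nonneg_left hyR.1 (show (0:ℝ) ≤ 2*m^2 by positivity)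
      have h8b := mul_le_mul_of_nonneg_left hyR.2 (show (0:ℝ) ≤ 2*m^2 by positivity)
      rw [abs_le]; constructor <;> [skip; skip] <;> first
        | linarith [h6, h7, h8a, h8b, sq_nonneg x, sq_nonneg y]
    have r1 : R*m ≤ R*m^2 := mul_le_mul_of_nonneg_left hmm2 hR
    have r2 : (R*R)*1 ≤ (R*R)*m^2 := by
      apply mul_le_mul_of_nonneg_left _ (mul_nonneg hR hR)
      linarith [hmm2]
    have r3 : 0 ≤ R*m^2 := mul_nonneg hR (by positivity)
    have r4 : (0:ℝ) ≤ m^2 := by positivity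
    have r5 : (0:ℝ) ≤ R*R*m^2 := mul_nonneg (mul_nonneg hR hR) r4
    calc |(-x - (D - E))*(D+E)| = |-(x*((D + E) - 2*m^3)) - (x^2 - 2*m^2*y + y^2)| := by rw [hprod]
      _ ≤ |x*((D + E) - 2*m^3)| + |x^2 - 2*m^2*y + y^2| := by
          rw [← abs_neg (x*((D + E) - 2*m^3))]; exact abs_sub _ _
      _ ≤ R * (m^2 + 2*R + m) + (R^2 + 2*m^2*R + R^2) := by linarith [hb2, hb3]
      _ ≤ 7*(R+1)^2*m^2 := by linarith [r1, r2, r3, r4, r5]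
  have h6 : |(-x) - (D - E)| * (D+E) = |(-x - (D - E))*(D+E)| := by
    rw [abs_mul, abs_of_pos hpos]
  have h7' : (m-1)*m^2 < D + E := by linarith [hDa, ham.1, hEl, hmm2]
  have h7 := mul_lt_mul_of_pos_left h7' hε
  have h8 := mul_le_mul_of_nonneg_right hεm (sq_nonneg m)
  have hvD : |(-x) - (D - E)| * (D+E) < ε * (D+E) := by
    rw [h6]; linarith [hnum, h7, h8]
  exact lt_of_mul_lt_mul_right hvD hpos.le

lemma conv_part : ∀ K : Set (ℝ×ℝ×ℝ), IsCompact K →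
    TendstoUniformlyOn (fun n x => phiN N3 ((((n:ℕ):ℝ)^3, (((n:ℕ):ℝ)^2, 0)) : ℝ×ℝ×ℝ) x)
      (fun p => -p.1) atTop K := by
  intro K hK
  rw [Metric.tendstoUniformlyOn_iff]
  intro ε hε
  obtain ⟨r, hr⟩ := hK.isBounded.subset_closedBall 0
  set R := max r 0 with hRdef
  have hR : 0 ≤ R := le_max_right _ _
  have hKR : K ⊆ Metric.closedBall 0 R :=
    hr.trans (Metric.closedBall_subset_closedBall (le_max_left _ _))
  obtain ⟨n₀, hn₀⟩ := exists_nat_ge (max (8*(R+1)) (7*(R+1)^2/ε + 1))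
  filter_upwards [eventually_ge_atTop n₀] with n hn p hp
  have hncast : (n₀:ℝ) ≤ (n:ℝ) := Nat.cast_le.mpr hn
  have hm1 : 8*(R+1) ≤ (n:ℝ) := le_trans (le_trans (le_max_left _ _) hn₀) hncast
  have hm2 : 7*(R+1)^2/ε + 1 ≤ (n:ℝ) := le_trans (le_trans (le_max_right _ _) hn₀) hncast
  have hpR : ‖p‖ ≤ R := by
    have := Metric.mem_closedBall.mp (hKR hp)
    simpa using this
  have hx : |p.1| ≤ R := le_trans (norm_fst_le p) hpR
  have hy : |p.2.1| ≤ R := le_trans (le_trans (norm_fst_le p.2) (norm_snd_le p)) hpR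
  have hw : |p.2.2| ≤ R := le_trans (le_trans (norm_snd_le p.2) (norm_snd_le p)) hpR
  have key := key_est R p.1 p.2.1 p.2.2 (n:ℝ) ε hR hx hy hw hε hm1 hm2
  rw [Real.dist_eq]
  have hsub : ((((n:ℕ):ℝ)^3, (((n:ℕ):ℝ)^2, 0)) : ℝ×ℝ×ℝ) - p
      = (((n:ℝ)^3 - p.1, ((n:ℝ)^2 - p.2.1, -p.2.2)) : ℝ×ℝ×ℝ) := by
    show (_ - _, _ - _, _ - _) = _
    rw [zero_sub]
  simpa [phiN, hsub] using key


lemma not_phi : ∀ z : ℝ×ℝ×ℝ, (fun p : ℝ×ℝ×ℝ => -p.1) ≠ phiN N3 z := by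
  rintro ⟨a, b, c⟩ h
  have h1 := congrFun h (a, b, c)
  simp only [phiN, sub_self] at h1
  have hN0 : N3 0 = 0 := by simp [N3]
  rw [hN0, zero_sub, neg_inj] at h1
  -- h1 : a = N3 (a,b,c)
  have hle1 : |a| + |c| ≤ a := by
    have : |a| + |c| ≤ N3 (a, b, c) := le_max_left _ _
    rwa [← h1] at this
  have hle2 : Real.sqrt (a^2 + b^2) ≤ a := by
    have : Real.sqrt (a^2 + b^2) ≤ N3 (a, b, c) := le_max_right _ _
    rwa [← h1] at this
  have ha0 : 0 ≤ a := le_trans (abs_nonneg a) (by linarith [abs_nonneg c, le_abs_self a])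
  have hc0 : c = 0 := by
    have := le_abs_self a
    have := abs_nonneg c
    have : |c| = 0 := le_antisymm (by linarith [le_abs_self a]) (abs_nonneg c)
    exact abs_eq_zero.mp this
  have hb0 : b = 0 := by
    have hs := Real.sq_sqrt (show (0:ℝ) ≤ a^2 + b^2 by positivity)
    have h2 : a^2 + b^2 ≤ a^2 := by
      have := mul_self_le_mul_self (Real.sqrt_nonneg (a^2+b^2)) hle2
      nlinarith [hs]
    nlinarith [sq_nonneg b]
  have h2 := congrFun h (0, 0, 1)
  subst hc0 hb0
  simp only [phiN, N3] at h2
  norm_num at h2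
  rw [Real.sqrt_sq ha0, abs_of_nonneg ha0, max_eq_left (by linarith),
    max_self] at h2
  linarith

lemma N3_le_add_of_sub (p q : ℝ × ℝ × ℝ) : N3 p ≤ N3 (p - q) + N3 q := by
  have := N3_add (p - q) q
  simpa using this

lemma not_bus : ¬ IsBusemannPointN N3 (fun p => -p.1) := by
  rintro ⟨-, T, γ, ⟨hT0i, hT0, hTub, hAG⟩, hConv⟩
  obtain ⟨M₁, hM₁⟩ := hAG (1/8) (by norm_num)
  set C : ℝ := N3 (γ 0) + 1 with hCdef
  have hC1 : 1 ≤ C := by linarith [N3_nonneg (γ 0)]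
  have hC0 : 0 ≤ C := by linarith
  have hpick : ∀ x : ℝ, ∃ s ∈ T, x < s := by
    intro x
    by_contra hcon
    push_neg at hcon
    exact hTub ⟨x, fun s hs => hcon s hs⟩
  have hns : ∀ s ∈ T, M₁ ≤ s → |N3 (γ s - γ 0) - s| < 1/8 := by
    intro s hs hMs
    have h := hM₁ s hs s hs hMs le_rfl
    rw [sub_self, N3_zero] at h
    simpa using h
  have hNup : ∀ s ∈ T, M₁ ≤ s → N3 (γ s) ≤ s + C := by
    intro s hs hMs
    have h1 := N3_le_add_of_sub (γ s) (γ 0)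
    have h2 := (abs_lt.mp (hns s hs hMs)).2
    rw [hCdef]; linarith
  have hNlow : ∀ s ∈ T, M₁ ≤ s → s - C ≤ N3 (γ s) := by
    intro s hs hMs
    have h1 : N3 (γ s - γ 0) ≤ N3 (γ s) + N3 (γ 0) := by
      have h := N3_le_add_of_sub (γ s - γ 0) (-(γ 0))
      rw [sub_neg_eq_add, sub_add_cancel, N3_neg] at h
      exact h
    have h2 := (abs_lt.mp (hns s hs hMs)).1
    rw [hCdef]; linarith
  -- upper bound on distance between two points on the geodesic
  have hseg : ∀ s ∈ T, ∀ t ∈ T, M₁ ≤ s → s ≤ t → N3 (γ t - γ s) ≤ t - s + 1/4 := by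
    intro s hs t ht hMs hst
    have h1 := (abs_lt.mp (hM₁ s hs t ht hMs hst)).2
    have h2 := (abs_lt.mp (hns s hs hMs)).1
    linarith
  -- lower bound on first coordinate
  have halow : ∀ s ∈ T, M₁ ≤ s → s - 2*C ≤ (γ s).1 := by
    intro s hs hMs
    obtain ⟨M', hM'⟩ := hConv {γ s} isCompact_singleton (1/8) (by norm_num)
    obtain ⟨t, ht, hts⟩ := hpick (max M' (max s M₁))
    have htM' : M' ≤ t := le_of_lt (lt_of_le_of_lt (le_max_left _ _) hts)
    have hst : s ≤ t := le_of_lt (lt_of_le_of_lt (le_trans (le_max_left _ _) (le_max_right _ _)) hts)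
    have htM₁ : M₁ ≤ t := le_of_lt (lt_of_le_of_lt (le_trans (le_max_right _ _) (le_max_right _ _)) hts)
    have h1 := hM' t ht htM' (γ s) rfl
    simp only [phiN] at h1
    have h2 := hseg s hs t ht hMs hst
    have h3 := hNlow t ht htM₁
    have h4 := (abs_lt.mp h1).1
    linarith
  -- upper bound on first coordinate
  have haup : ∀ s ∈ T, M₁ ≤ s → (γ s).1 ≤ s + C := by
    intro s hs hMs
    have h1 : |(γ s).1| + |(γ s).2.2| ≤ N3 (γ s) := le_max_left _ _
    have := hNup s hs hMs
    have := le_abs_self (γ s).1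
    have := abs_nonneg (γ s).2.2
    linarith
  -- the two-point compact set
  have hK2 : IsCompact ({((0:ℝ),(0:ℝ),(1:ℝ)), ((0:ℝ),(0:ℝ),(-1:ℝ))} : Set (ℝ×ℝ×ℝ)) :=
    (Set.finite_singleton _ |>.insert _).isCompact
  obtain ⟨M₂, hM₂⟩ := hConv _ hK2 (1/8) (by norm_num)
  set M₀ : ℝ := max M₁ (max M₂ (2*C + 1)) with hM₀def
  have hM₀₁ : M₁ ≤ M₀ := le_max_left _ _
  have hM₀₂ : M₂ ≤ M₀ := le_trans (le_max_left _ _) (le_max_right _ _)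
  have hM₀C : 2*C + 1 ≤ M₀ := le_trans (le_max_right _ _) (le_max_right _ _)
  -- lower bound for b² along the geodesic
  have hb2low : ∀ t ∈ T, M₀ ≤ t → (7/4)*(t - 2*C) ≤ ((γ t).2.1)^2 := by
    intro t ht hMt
    have hat : t - 2*C ≤ (γ t).1 := halow t ht (le_trans hM₀₁ hMt)
    have hat0 : 0 ≤ (γ t).1 := by linarith
    set a := (γ t).1
    set b := (γ t).2.1
    set c := (γ t).2.2
    set z : ℝ := if 0 ≤ c then -1 else 1 with hz
    set p : ℝ×ℝ×ℝ := (0, 0, z) with hp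
    have hpK : p ∈ ({((0:ℝ),(0:ℝ),(1:ℝ)), ((0:ℝ),(0:ℝ),(-1:ℝ))} : Set (ℝ×ℝ×ℝ)) := by
      rw [hp, hz]
      by_cases h : 0 ≤ c <;> simp [h]
    have h1 := hM₂ t ht (le_trans hM₀₂ hMt) p hpK
    simp only [phiN, hp] at h1
    have hsub : γ t - ((0:ℝ),(0:ℝ),z) = (a, b, c - z) := by
      show (_ - _, _ - _, _ - _) = _
      rw [sub_zero, sub_zero]
    rw [hsub] at h1
    have hcz : |c - z| = |c| + 1 := by
      rw [hz]
      by_cases h : 0 ≤ c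
      · rw [if_pos h, abs_of_nonneg h, show c - (-1) = c + 1 by ring,
          abs_of_nonneg (by linarith : (0:ℝ) ≤ c + 1)]
      · push_neg at h
        rw [if_neg (not_le.mpr h), abs_of_neg h,
          abs_of_nonpos (by linarith : c - 1 ≤ 0)]
        ring
    set S := Real.sqrt (a^2 + b^2) with hS
    have hS0 : 0 ≤ S := Real.sqrt_nonneg _
    have hS2 : S^2 = a^2 + b^2 := Real.sq_sqrt (by positivity)
    have hN1 : N3 (a, b, c - z) = max (a + |c| + 1) S := by
      simp only [N3, hcz, abs_of_nonneg hat0, ← hS]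
      ring_nf
    have hN2 : N3 (γ t) = max (a + |c|) S := by
      show max (|a| + |c|) (Real.sqrt (a^2 + b^2)) = _
      rw [abs_of_nonneg hat0, ← hS]
    rw [hN1, hN2] at h1
    norm_num at h1
    have hSlow : a + |c| + 7/8 ≤ S := by
      by_contra hcon
      push_neg at hcon
      have e1 : max (a + |c|) S ≤ a + |c| + 7/8 :=
        max_le (by linarith) hcon.le
      have e2 : a + |c| + 1 ≤ max (a + |c| + 1) S := le_max_left _ _
      have := (abs_lt.mp h1).2
      linarith
    have hSa : a + 7/8 ≤ S := by linarith [abs_nonneg c]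
    have : (a + 7/8)^2 ≤ S^2 := pow_le_pow_left₀ (by linarith) hSa 2
    nlinarith [this, hS2]
  -- upper bound for b²
  have hb2up : ∀ t ∈ T, M₀ ≤ t → ((γ t).2.1)^2 ≤ 6*C*t := by
    intro t ht hMt
    have hat : t - 2*C ≤ (γ t).1 := halow t ht (le_trans hM₀₁ hMt)
    have hat0 : 0 ≤ (γ t).1 := by linarith
    set a := (γ t).1
    set b := (γ t).2.1
    set S := Real.sqrt (a^2 + b^2) with hS
    have hS0 : 0 ≤ S := Real.sqrt_nonneg _
    have hS2 : S^2 = a^2 + b^2 := Real.sq_sqrt (by positivity)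
    have hSN : S ≤ N3 (γ t) := le_max_right _ _
    have h2 : N3 (γ t) ≤ t + C := hNup t ht (le_trans hM₀₁ hMt)
    have hSup : S ≤ t + C := le_trans hSN h2
    have h3 : S^2 ≤ (t + C)^2 := pow_le_pow_left₀ hS0 hSup 2
    have h4 : (t - 2*C)^2 ≤ a^2 := pow_le_pow_left₀ (by linarith) hat 2
    nlinarith [hS2]
  -- the step : jumping far ahead decreases a(t) - t by at least 1/4
  have hstep : ∀ s ∈ T, M₀ ≤ s → ∃ t ∈ T, M₀ ≤ t ∧
      (γ t).1 - t ≤ ((γ s).1 - s) - 1/4 := by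
    intro s hs hMs
    have hs0 : 0 ≤ s := hT0i hs
    obtain ⟨t, ht, hts⟩ := hpick (max M₀ (max (222*C^2*(s+1)) (s + 4*C + 1)))
    have htM₀ : M₀ ≤ t := le_of_lt (lt_of_le_of_lt (le_max_left _ _) hts)
    have ht222 : 222*C^2*(s+1) ≤ t :=
      le_of_lt (lt_of_le_of_lt (le_trans (le_max_left _ _) (le_max_right _ _)) hts)
    have hts4 : s + 4*C + 1 ≤ t :=
      le_of_lt (lt_of_le_of_lt (le_trans (le_max_right _ _) (le_max_right _ _)) hts)
    have hst : s ≤ t := by linarith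
    refine ⟨t, ht, htM₀, ?_⟩
    set as := (γ s).1
    set bs := (γ s).2.1
    set at' := (γ t).1
    set bt := (γ t).2.1
    have hW : N3 (γ t - γ s) ≤ t - s + 1/4 :=
      hseg s hs t ht (le_trans hM₀₁ hMs) hst
    have hWlow : Real.sqrt ((at' - as)^2 + (bt - bs)^2) ≤ N3 (γ t - γ s) := by
      have : (γ t - γ s).1 = at' - as := rfl
      have : (γ t - γ s).2.1 = bt - bs := rfl
      exact le_max_right _ _
    have hWs : Real.sqrt ((at' - as)^2 + (bt - bs)^2) ≤ t - s + 1/4 := le_trans hWlow hW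
    have hWs0 : (0:ℝ) ≤ t - s + 1/4 := by linarith
    have hsq : (at' - as)^2 + (bt - bs)^2 ≤ (t - s + 1/4)^2 := by
      have h5 := pow_le_pow_left₀ (Real.sqrt_nonneg _) hWs 2
      rwa [Real.sq_sqrt (by positivity)] at h5
    -- (bt - bs)² ≥ t - s
    have hbtl : (7/4)*(t - 2*C) ≤ bt^2 := hb2low t ht htM₀
    have hbsu : bs^2 ≤ 6*C*s := hb2up s hs hMs
    have hbs0 : 0 ≤ bs^2 := sq_nonneg _
    have hDb : t - s ≤ (bt - bs)^2 := by
      have e1 : bt*bs ≤ |bt| * |bs| := by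
        rw [← abs_mul]; exact le_abs_self _
      have e2 : 0 ≤ (|bt| - 24*C*|bs|)^2 := sq_nonneg _
      have e3 : 48*C*(|bt| * |bs|) ≤ bt^2 + 576*C^2*bs^2 := by
        have h6 : |bt|^2 = bt^2 := sq_abs _
        have h7 : |bs|^2 = bs^2 := sq_abs _
        nlinarith [e2]
      have e4 : 48*C*(bt*bs) ≤ 48*C*(|bt| * |bs|) :=
        mul_le_mul_of_nonneg_left e1 (by linarith)
      -- 48*C*(t - s) ≤ 48*C*(bt - bs)^2
      have f1 : 46*C*((7/4)*(t - 2*C)) ≤ 46*C*bt^2 :=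
        mul_le_mul_of_nonneg_left hbtl (by linarith)
      have f2 : 1152*C^2*bs^2 ≤ 1152*C^2*(6*C*s) :=
        mul_le_mul_of_nonneg_left hbsu (by positivity)
      have g1 : 0 ≤ (2*C - 2)*bt^2 := mul_nonneg (by linarith) (sq_nonneg _)
      have g2 : 0 ≤ 48*C*bs^2 := mul_nonneg (by linarith) (sq_nonneg _)
      have g3 : C^2 ≤ C^3 := by nlinarith [sq_nonneg C]
      have g4 : 222*C^3*s + 222*C^3 ≤ C*t := by
        have := mul_le_mul_of_nonneg_left ht222 hC0
        nlinarith [this]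
      have gs : 0 ≤ C*s := mul_nonneg hC0 hs0
      have hbig : 48*C*(t - s) ≤ 48*C*((bt - bs)^2) := by
        nlinarith [e3, e4, f1, f2, g1, g2, g3, g4, gs]
      have := le_of_mul_le_mul_left hbig (by linarith : (0:ℝ) < 48*C)
      linarith
    -- a increment
    have hatl : t - 2*C ≤ at' := halow t ht (le_trans hM₀₁ htM₀)
    have hasu : as ≤ s + C := haup s hs (le_trans hM₀₁ hMs)
    have hDa0 : 0 ≤ at' - as := by linarith
    have hDa2 : (at' - as)^2 ≤ (t - s - 1/4)^2 := by nlinarith [hsq, hDb]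
    have hDa : at' - as ≤ t - s - 1/4 := by
      have h8 := Real.sqrt_le_sqrt hDa2
      rwa [Real.sqrt_sq hDa0, Real.sqrt_sq (by linarith)] at h8
    linarith
  -- iterate the step
  have hiter : ∀ k : ℕ, ∃ s ∈ T, M₀ ≤ s ∧ (γ s).1 - s ≤ C - k*(1/4) := by
    intro k
    induction k with
    | zero =>
      obtain ⟨s, hs, hMs⟩ := hpick M₀
      refine ⟨s, hs, hMs.le, ?_⟩
      have := haup s hs (le_trans hM₀₁ hMs.le)
      simp only [Nat.cast_zero]
      linarith
    | succ k ih =>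
      obtain ⟨s, hs, hMs, hθ⟩ := ih
      obtain ⟨t, ht, hMt, hstep'⟩ := hstep s hs hMs
      refine ⟨t, ht, hMt, ?_⟩
      push_cast
      linarith
  obtain ⟨k, hk⟩ := exists_nat_gt (12*C)
  obtain ⟨s, hs, hMs, hθ⟩ := hiter k
  have h9 := halow s hs (le_trans hM₀₁ hMs)
  linarith

/-- For the norm `max(|x| + |z|, √(x² + y²))` on `ℝ³`, the function
`(x,y,z) ↦ −x` is a horofunction but not a Busemann point. -/
theorem example_horofunction_not_busemann :
    IsHorofunctionN N3 (fun p => -p.1) ∧ ¬ IsBusemannPointN N3 (fun p => -p.1) := by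
  refine ⟨⟨⟨fun n => (((n:ℝ)^3, ((n:ℝ)^2, 0)) : ℝ×ℝ×ℝ), conv_part⟩, not_phi⟩, not_bus⟩
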